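/- arXiv:2509.20773 — 3 statements merged into one kernel-verified Lean document; each statement's English description precedes it below -/
import Mathlib

section
/- For every integer n ≥ 2, the number of mutually abelian-bordered pairs (u,v) of binary words with |u| = |v| = n and lsb(u,v) + lsb(v,u) = n + 2 equals 2·Σ_{i=4}^{n−2} Σ_{l=2}^{n−i} Σ_{m=l+2}^{i+l−2} (4/((i−2)(n−i)))·C(n−i, l)·C(n−i, l−2)·C(i−2, m−l)·C(i−2, m−l−2), where each summand is a nonnegative integer (the sum may be computed in the rationals). -/
/-- Abelian equivalence of binary words; the alphabet `{a, b}` is encoded by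
`Bool` with `a = true` and `b = false`. -/
def AbEq (x y : List Bool) : Prop :=
  x.count true = y.count true ∧ x.count false = y.count false

/-- `(x, y)` is an internal abelian-border of `(u, v)`: `x` is a nonempty proper
suffix of `u`, `y` is a proper prefix of `v`, and `x ~ y`. -/
def IsIntBorder (u v x y : List Bool) : Prop :=
  x ≠ [] ∧ x ≠ u ∧ x <:+ u ∧ y <+: v ∧ y ≠ v ∧ AbEq x y

/-- `(x, y)` is an external abelian-border of `(u, v)`: `x` is a nonempty proper
prefix of `u`, `y` is a proper suffix of `v`, and `x ~ y`. -/
def IsExtBorder (u v x y : List Bool) : Prop :=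
  x ≠ [] ∧ x ≠ u ∧ x <+: u ∧ y <:+ v ∧ y ≠ v ∧ AbEq x y

/-- `(u, v)` has an internal abelian-border. -/
def HasIntB (u v : List Bool) : Prop := ∃ x y, IsIntBorder u v x y

/-- `(u, v)` has an external abelian-border. -/
def HasExtB (u v : List Bool) : Prop := ∃ x y, IsExtBorder u v x y

/-- `(u, v)` is mutually abelian-bordered. -/
def MAB (u v : List Bool) : Prop := HasIntB u v ∧ HasExtB u v

/-- `(u, v)` is mutually abelian-unbordered. -/
def MAU (u v : List Bool) : Prop := ¬ HasIntB u v ∧ ¬ HasExtB u v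

/-- `lsb u v` is the length of the shortest internal abelian-border of `(u, v)`:
the least `t` with `1 ≤ t ≤ |u| - 1` such that the suffix of `u` of length `t`
is abelian equivalent to the prefix of `v` of length `t`. -/
noncomputable def lsb (u v : List Bool) : ℕ :=
  sInf {t | 1 ≤ t ∧ t ≤ u.length - 1 ∧ AbEq (u.drop (u.length - t)) (v.take t)}



abbrev XX := Bool × Bool

def stp (p : XX) : ℤ := (cond p.1 1 0) - (cond p.2 1 0)

/-- walk value after `t` steps -/
def Zt (w : List XX) (t : ℕ) : ℤ := ((w.take t).map stp).sum

lemma Zt_zero (w : List XX) : Zt w 0 = 0 := rfl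

lemma Zt_len_le (w : List XX) {t : ℕ} (h : w.length ≤ t) : Zt w t = Zt w w.length := by
  unfold Zt
  rw [List.take_of_length_le h, List.take_of_length_le le_rfl]

lemma Zt_succ (w : List XX) {t : ℕ} (h : t < w.length) :
    Zt w (t + 1) = Zt w t + stp w[t] := by
  unfold Zt
  have h' : t < (w.map stp).length := by simpa using h
  rw [List.map_take, List.map_take, List.sum_take_succ _ t h']
  simp

lemma abs_stp_le (p : XX) : |stp p| ≤ 1 := by
  rcases p with ⟨a, b⟩ <;> rcases a <;> rcases b <;> simp [stp]

lemma Zt_step_abs (w : List XX) (t : ℕ) : |Zt w (t + 1) - Zt w t| ≤ 1 := by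
  rcases lt_or_ge t w.length with h | h
  · rw [Zt_succ w h]; simpa using abs_stp_le w[t]
  · rw [Zt_len_le w h, Zt_len_le w (le_trans h (Nat.le_succ t))]; simp

lemma Zt_diff_abs (w : List XX) {s t : ℕ} (h : s ≤ t) :
    |Zt w t - Zt w s| ≤ (t : ℤ) - s := by
  induction t with
  | zero => interval_cases s; simp
  | succ t ih =>
    rcases Nat.lt_or_ge s (t+1) with hs | hs
    · have hs' : s ≤ t := Nat.lt_succ_iff.mp hs
      have h1 := ih hs'
      have h2 := Zt_step_abs w t
      have h3 : |Zt w (t+1) - Zt w s| ≤ |Zt w (t+1) - Zt w t| + |Zt w t - Zt w s| := by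
        have := abs_add_le (Zt w (t+1) - Zt w t) (Zt w t - Zt w s)
        simpa using this
      push_cast
      omega
    · have : s = t + 1 := le_antisymm h hs
      subst this; simp

/-- discrete IVT going up -/
lemma Zt_ivt (w : List XX) {s t : ℕ} (hst : s ≤ t) {c : ℤ}
    (h1 : Zt w s < c) (h2 : c ≤ Zt w t) : ∃ r, s < r ∧ r ≤ t ∧ Zt w r = c := by
  induction t with
  | zero => interval_cases s; omega
  | succ t ih =>
    rcases Nat.lt_or_ge s (t+1) with hs | hs
    · have hs' : s ≤ t := Nat.lt_succ_iff.mp hs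
      rcases lt_or_ge (Zt w t) c with h3 | h3
      · have h4 := Zt_step_abs w t
        have : Zt w (t+1) = c := by
          rw [abs_le] at h4; omega
        exact ⟨t+1, hs, le_rfl, this⟩
      · obtain ⟨r, hr1, hr2, hr3⟩ := ih hs' h3
        exact ⟨r, hr1, le_trans hr2 (Nat.le_succ t), hr3⟩
    · have : s = t + 1 := le_antisymm hst hs
      subst this; omega

lemma Zt_take (w : List XX) {i t : ℕ} (h : t ≤ i) : Zt (w.take i) t = Zt w t := by
  unfold Zt
  rw [List.take_take, min_eq_left h]

lemma Zt_append_left (w₁ w₂ : List XX) {t : ℕ} (h : t ≤ w₁.length) :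
    Zt (w₁ ++ w₂) t = Zt w₁ t := by
  unfold Zt
  rw [List.take_append, Nat.sub_eq_zero_of_le h]
  simp

lemma Zt_append_right (w₁ w₂ : List XX) (s : ℕ) :
    Zt (w₁ ++ w₂) (w₁.length + s) = Zt w₁ w₁.length + Zt w₂ s := by
  unfold Zt
  rw [List.take_append]
  have h1 : List.take (w₁.length + s) w₁ = w₁ := List.take_of_length_le (by omega)
  rw [h1]
  simp

lemma Zt_reverse (w : List XX) {t : ℕ} (h : t ≤ w.length) :
    Zt w.reverse t = Zt w w.length - Zt w (w.length - t) := by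
  unfold Zt
  rw [List.take_reverse, List.take_of_length_le le_rfl]
  have key : (List.map stp w).sum
      = (List.map stp (w.take (w.length - t))).sum + (List.map stp (w.drop (w.length - t))).sum := by
    conv_lhs => rw [(List.take_append_drop (w.length - t) w).symm]
    rw [List.map_append, List.sum_append]
  rw [List.map_reverse, List.sum_reverse]
  omega

def swp (p : XX) : XX := (p.2, p.1)

lemma stp_swp (p : XX) : stp (swp p) = - stp p := by
  rcases p with ⟨a, b⟩ <;> rcases a <;> rcases b <;> simp [stp, swp]

lemma Zt_swp (w : List XX) (t : ℕ) : Zt (w.map swp) t = - Zt w t := by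
  unfold Zt
  rw [← List.map_take, List.map_map]
  have : (stp ∘ swp) = fun p => - stp p := funext stp_swp
  rw [this]
  induction (w.take t) with
  | nil => simp
  | cons a l ih => simp at ih ⊢; omega

/-- all lists over XX of length n, built by appending on the right -/
def lists : ℕ → Finset (List XX)
  | 0 => {[]}
  | n+1 => ((lists n) ×ˢ (Finset.univ : Finset XX)).image (fun q => q.1 ++ [q.2])

lemma mem_lists {n : ℕ} {w : List XX} : w ∈ lists n ↔ w.length = n := by
  induction n generalizing w with
  | zero => simp [lists, List.length_eq_zero_iff]
  | succ n ih =>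
    simp only [lists, Finset.mem_image, Finset.mem_product, Finset.mem_univ, and_true]
    constructor
    · rintro ⟨⟨m, a⟩, hm, rfl⟩
      simp [ih.mp hm]
    · intro hw
      have hne : w ≠ [] := by intro h; subst h; simp at hw
      refine ⟨⟨w.dropLast, w.getLast hne⟩, ?_, List.dropLast_append_getLast hne⟩
      rw [ih, List.length_dropLast, hw]
      omega

def LF (e : ℤ) (i : ℕ) : Finset (List XX) :=
  (lists i).filter (fun w => Zt w w.length = 0 ∧ Zt w (w.length - 2) = e ∧
    ∀ t, t < w.length → 1 ≤ t → Zt w t ≠ 0)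

def RF (e : ℤ) (b : ℕ) : Finset (List XX) :=
  (lists b).filter (fun w => Zt w w.length = e ∧ ∀ t, t < w.length → Zt w t ≠ e)

open scoped Classical in
noncomputable def PF (n : ℕ) : Finset (List XX) :=
  (lists n).filter (fun w =>
    (∃ t, 1 ≤ t ∧ t ≤ n - 1 ∧ Zt w t = 0) ∧
    (∃ t, 1 ≤ t ∧ t ≤ n - 1 ∧ Zt w (n - t) = Zt w n) ∧
    sInf {t | 1 ≤ t ∧ t ≤ n - 1 ∧ Zt w t = 0}
      + sInf {t | 1 ≤ t ∧ t ≤ n - 1 ∧ Zt w (n - t) = Zt w n} = n + 2)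

lemma mem_LF {e : ℤ} {i : ℕ} {w : List XX} :
    w ∈ LF e i ↔ w ∈ lists i ∧ (Zt w w.length = 0 ∧ Zt w (w.length - 2) = e ∧
      ∀ t, t < w.length → 1 ≤ t → Zt w t ≠ 0) := by
  unfold LF; exact Finset.mem_filter

lemma mem_RF {e : ℤ} {b : ℕ} {w : List XX} :
    w ∈ RF e b ↔ w ∈ lists b ∧ (Zt w w.length = e ∧ ∀ t, t < w.length → Zt w t ≠ e) := by
  unfold RF; exact Finset.mem_filter

open scoped Classical in
lemma mem_PF {n : ℕ} {w : List XX} :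
    w ∈ PF n ↔ w ∈ lists n ∧
      ((∃ t, 1 ≤ t ∧ t ≤ n - 1 ∧ Zt w t = 0) ∧
      (∃ t, 1 ≤ t ∧ t ≤ n - 1 ∧ Zt w (n - t) = Zt w n) ∧
      sInf {t | 1 ≤ t ∧ t ≤ n - 1 ∧ Zt w t = 0}
        + sInf {t | 1 ≤ t ∧ t ≤ n - 1 ∧ Zt w (n - t) = Zt w n} = n + 2) := by
  unfold PF; exact Finset.mem_filter

lemma sInf_eq_of_min {S : Set ℕ} {m : ℕ} (hm : m ∈ S) (hlt : ∀ k < m, k ∉ S) :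
    sInf S = m := by
  refine le_antisymm (Nat.sInf_le hm) ?_
  by_contra h
  push_neg at h
  exact hlt _ h (Nat.sInf_mem ⟨m, hm⟩)

lemma Zt_drop (w : List XX) {i : ℕ} (h : i ≤ w.length) (s : ℕ) :
    Zt (w.drop i) s = Zt w (i + s) - Zt w i := by
  have hlen : (w.take i).length = i := by rw [List.length_take]; omega
  conv_rhs => rw [← List.take_append_drop i w]
  rw [show i + s = (w.take i).length + s by rw [hlen],
    Zt_append_right, Zt_append_left _ _ (by rw [hlen])]
  rw [hlen, Zt_take w le_rfl]
  ring

lemma PF_fwd (n : ℕ) {w : List XX} (hw : w ∈ PF n) :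
    ∃ i ∈ Finset.Icc 4 (n-2), ∃ e ∈ ({2,-2} : Finset ℤ),
      w.take i ∈ LF e i ∧ w.drop i ∈ RF e (n - i) ∧
      sInf {t | 1 ≤ t ∧ t ≤ n - 1 ∧ Zt w t = 0} = i ∧ Zt w n = e := by
  classical
  rw [mem_PF] at hw
  obtain ⟨hwl, hT, hU, hsum⟩ := hw
  have hlen : w.length = n := mem_lists.mp hwl
  set T : Set ℕ := {t | 1 ≤ t ∧ t ≤ n - 1 ∧ Zt w t = 0} with hTdef
  set U : Set ℕ := {t | 1 ≤ t ∧ t ≤ n - 1 ∧ Zt w (n - t) = Zt w n} with hUdef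
  set i := sInf T with hidef
  set j := sInf U with hjdef
  obtain ⟨hi1, hi2, hi0⟩ : i ∈ T := Nat.sInf_mem hT
  obtain ⟨hj1, hj2, hjZ⟩ : j ∈ U := Nat.sInf_mem hU
  have hij : i + j = n + 2 := hsum
  have hi3 : 3 ≤ i := by omega
  have hmin : ∀ t, 1 ≤ t → t < i → Zt w t ≠ 0 := by
    intro t h1 h2 hz
    exact Nat.notMem_of_lt_sInf h2 ⟨h1, by omega, hz⟩
  have hminU : ∀ s, i - 1 ≤ s → s ≤ n - 1 → Zt w s ≠ Zt w n := by
    intro s hs1 hs2 hz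
    have h1 : n - s < j := by omega
    refine Nat.notMem_of_lt_sInf h1 ⟨by omega, by omega, ?_⟩
    rw [show n - (n - s) = s by omega]
    exact hz
  set e := Zt w n with hedef
  have hZi2 : Zt w (i-2) = e := by rw [show i - 2 = n - j by omega]; exact hjZ
  have he0 : e ≠ 0 := fun h => hminU i (by omega) hi2 (by rw [hi0, h])
  have hZa : Zt w (i-1) ≠ 0 := hmin (i-1) (by omega) (by omega)
  have hZb : Zt w (i-1) ≠ e := hminU (i-1) le_rfl (by omega)
  have s1 := Zt_step_abs w (i-2)
  have s2 := Zt_step_abs w (i-1)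
  rw [show i - 2 + 1 = i - 1 by omega] at s1
  rw [show i - 1 + 1 = i by omega] at s2
  rw [abs_le] at s1 s2
  have he2 : e = 2 ∨ e = -2 := by omega
  have hi4 : 4 ≤ i := by
    by_contra h
    have h3 : i = 3 := by omega
    rw [h3] at hZi2
    norm_num at hZi2
    have s0 := Zt_step_abs w 0
    rw [show (0:ℕ)+1 = 1 from rfl, Zt_zero, abs_le] at s0
    omega
  have hile : i ≤ n - 2 := by
    have hd := Zt_diff_abs w (show i ≤ n by omega)
    rw [abs_le, hi0] at hd
    have hZn : Zt w n = e := rfl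
    omega
  refine ⟨i, Finset.mem_Icc.mpr ⟨hi4, hile⟩, e, by rcases he2 with h|h <;> simp [h], ?_, ?_, rfl, rfl⟩
  · -- LF membership
    rw [mem_LF]
    have hl : (w.take i).length = i := by rw [List.length_take]; omega
    refine ⟨mem_lists.mpr hl, ?_, ?_, ?_⟩
    · rw [hl, Zt_take w le_rfl, hi0]
    · rw [hl, Zt_take w (by omega)]; exact hZi2
    · intro t h2 h1
      rw [hl] at h2
      rw [Zt_take w (le_of_lt h2)]
      exact hmin t h1 h2
  · -- RF membership
    rw [mem_RF]
    have hl : (w.drop i).length = n - i := by rw [List.length_drop]; omega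
    have hdrop : ∀ s, Zt (w.drop i) s = Zt w (i + s) := by
      intro s
      rw [Zt_drop w (by omega) s, hi0]
      ring
    refine ⟨mem_lists.mpr hl, ?_, ?_⟩
    · rw [hl, hdrop, show i + (n - i) = n by omega]
    · intro s hs
      rw [hl] at hs
      rw [hdrop]
      rcases Nat.eq_zero_or_pos s with rfl | hs1
      · rw [Nat.add_zero, hi0]; exact fun h => he0 h.symm
      · exact hminU (i + s) (by omega) (by omega)

lemma PF_bwd {n i : ℕ} (hi : i ∈ Finset.Icc 4 (n-2)) {e : ℤ} (he : e ∈ ({2,-2} : Finset ℤ))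
    {w₁ w₂ : List XX} (h1 : w₁ ∈ LF e i) (h2 : w₂ ∈ RF e (n - i)) :
    (w₁ ++ w₂) ∈ PF n ∧
    sInf {t | 1 ≤ t ∧ t ≤ n - 1 ∧ Zt (w₁ ++ w₂) t = 0} = i ∧ Zt (w₁ ++ w₂) n = e := by
  rw [Finset.mem_Icc] at hi
  obtain ⟨hi4, hin⟩ := hi
  have he2 : e = 2 ∨ e = -2 := by simpa using he
  rw [mem_LF] at h1; rw [mem_RF] at h2
  obtain ⟨h1l, hL0, hLe, hLne⟩ := h1
  obtain ⟨h2l, hRe, hRne⟩ := h2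
  have l1 : w₁.length = i := mem_lists.mp h1l
  have l2 : w₂.length = n - i := mem_lists.mp h2l
  rw [l1] at hL0 hLe hLne
  rw [l2] at hRe hRne
  have hn6 : 6 ≤ n := by omega
  have hwl : (w₁ ++ w₂).length = n := by rw [List.length_append, l1, l2]; omega
  have hZleft : ∀ t, t ≤ i → Zt (w₁ ++ w₂) t = Zt w₁ t :=
    fun t ht => Zt_append_left w₁ w₂ (by omega)
  have hZright : ∀ s, Zt (w₁ ++ w₂) (i + s) = Zt w₂ s := by
    intro s
    rw [show i + s = w₁.length + s by rw [l1], Zt_append_right, l1, hL0, zero_add]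
  have hb2 : 2 ≤ n - i := by
    have hd := Zt_diff_abs w₂ (show 0 ≤ n - i by omega)
    rw [Zt_zero, hRe, abs_le] at hd
    simp only [sub_zero, Nat.cast_sub, Nat.cast_zero] at hd
    omega
  have hZn : Zt (w₁ ++ w₂) n = e := by
    rw [show n = i + (n - i) by omega, hZright, hRe]
  have hZi : Zt (w₁ ++ w₂) i = 0 := by rw [hZleft i le_rfl, hL0]
  have hZi2 : Zt (w₁ ++ w₂) (i-2) = e := by rw [hZleft _ (by omega)]; exact hLe
  have hTmin : sInf {t | 1 ≤ t ∧ t ≤ n - 1 ∧ Zt (w₁ ++ w₂) t = 0} = i := by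
    apply sInf_eq_of_min
    · exact ⟨by omega, by omega, hZi⟩
    · rintro k hk ⟨hk1, hk2, hkz⟩
      exact hLne k (by omega) hk1 (by rw [← hZleft k (by omega)]; exact hkz)
  have hZim1 : Zt (w₁ ++ w₂) (i-1) ≠ e := by
    have hs := Zt_step_abs (w₁ ++ w₂) (i-1)
    rw [show i - 1 + 1 = i by omega, hZi, abs_le] at hs
    omega
  have hUmin : sInf {t | 1 ≤ t ∧ t ≤ n - 1 ∧ Zt (w₁ ++ w₂) (n - t) = Zt (w₁ ++ w₂) n}
      = n - i + 2 := by
    apply sInf_eq_of_min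
    · refine ⟨by omega, by omega, ?_⟩
      rw [show n - (n - i + 2) = i - 2 by omega, hZi2, hZn]
    · rintro k hk ⟨hk1, hk2, hkz⟩
      rw [hZn] at hkz
      rcases Nat.lt_or_ge (n - k) i with hs | hs
      · have hik : n - k = i - 1 := by omega
        rw [hik] at hkz
        exact hZim1 hkz
      · have hkz' : Zt (w₁ ++ w₂) (i + (n - k - i)) = e := by
          rw [show i + (n - k - i) = n - k by omega]; exact hkz
        rw [hZright] at hkz'
        exact hRne (n - k - i) (by omega) hkz'
  refine ⟨?_, hTmin, hZn⟩
  rw [mem_PF]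
  refine ⟨mem_lists.mpr hwl, ⟨i, by omega, by omega, hZi⟩,
    ⟨n - i + 2, by omega, by omega, ?_⟩, ?_⟩
  · rw [show n - (n - i + 2) = i - 2 by omega, hZi2, hZn]
  · rw [hTmin, hUmin]; omega

lemma card_fiber (n i : ℕ) (e : ℤ) :
    (((LF e i) ×ˢ (RF e (n - i))).image (fun r : List XX × List XX => r.1 ++ r.2)).card
      = (LF e i).card * (RF e (n - i)).card := by
  rw [Finset.card_image_of_injOn, Finset.card_product]
  rintro ⟨a₁, a₂⟩ ha ⟨b₁, b₂⟩ hb hab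
  simp only [Finset.mem_coe, Finset.mem_product] at ha hb
  have la : a₁.length = i := mem_lists.mp (mem_LF.mp ha.1).1
  have lb : b₁.length = i := mem_lists.mp (mem_LF.mp hb.1).1
  obtain ⟨h1, h2⟩ := List.append_inj hab (la.trans lb.symm)
  exact Prod.ext h1 h2

lemma PF_card (n : ℕ) :
    (PF n).card = ∑ i ∈ Finset.Icc 4 (n-2),
      ((LF 2 i).card * (RF 2 (n-i)).card + (LF (-2) i).card * (RF (-2) (n-i)).card) := by
  classical
  have hdecomp : PF n = (Finset.Icc 4 (n-2) ×ˢ ({2,-2} : Finset ℤ)).biUnion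
      (fun q => ((LF q.2 q.1) ×ˢ (RF q.2 (n - q.1))).image (fun r => r.1 ++ r.2)) := by
    ext w
    simp only [Finset.mem_biUnion, Finset.mem_image, Finset.mem_product, Prod.exists]
    constructor
    · intro hw
      obtain ⟨i, hi, e, he, hL, hR, _, _⟩ := PF_fwd n hw
      exact ⟨i, e, ⟨hi, he⟩, w.take i, w.drop i, ⟨hL, hR⟩, List.take_append_drop i w⟩
    · rintro ⟨i, e, ⟨hi, he⟩, w₁, w₂, ⟨hL, hR⟩, rfl⟩
      exact (PF_bwd hi he hL hR).1
  rw [hdecomp, Finset.card_biUnion, Finset.sum_product]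
  · refine Finset.sum_congr rfl ?_
    intro i _
    rw [show ({2,-2} : Finset ℤ) = insert 2 {-2} from rfl,
      Finset.sum_insert (by norm_num), Finset.sum_singleton]
    rw [card_fiber n i 2, card_fiber n i (-2)]
  · rintro ⟨i, e⟩ hq ⟨i', e'⟩ hq' hne
    simp only [Finset.mem_coe, Finset.mem_product] at hq hq'
    rw [Function.onFun, Finset.disjoint_left]
    rintro w hw hw'
    rw [Finset.mem_image] at hw hw'
    obtain ⟨⟨w₁, w₂⟩, hmem, heq⟩ := hw
    obtain ⟨⟨w₁', w₂'⟩, hmem', heq'⟩ := hw'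
    rw [Finset.mem_product] at hmem hmem'
    have F1 := PF_bwd hq.1 hq.2 hmem.1 hmem.2
    have F2 := PF_bwd hq'.1 hq'.2 hmem'.1 hmem'.2
    rw [heq] at F1
    rw [heq'] at F2
    apply hne
    have : i = i' := F1.2.1.symm.trans F2.2.1
    have : e = e' := F1.2.2.symm.trans F2.2.2
    simp_all

lemma stp_eq_one {p : XX} : stp p = 1 ↔ p = (true, false) := by
  rcases p with ⟨a, b⟩; rcases a <;> rcases b <;> simp [stp]

lemma stp_eq_negone {p : XX} : stp p = -1 ↔ p = (false, true) := by
  rcases p with ⟨a, b⟩; rcases a <;> rcases b <;> simp [stp]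

lemma take_snoc (w : List XX) {t : ℕ} (h : t < w.length) :
    w.take (t+1) = w.take t ++ [w[t]] := by
  rw [List.take_succ, List.getElem?_eq_getElem h]
  rfl

lemma swp_swp (p : XX) : swp (swp p) = p := rfl

lemma map_swp_invol (w : List XX) : (w.map swp).map swp = w := by
  rw [List.map_map]
  have : swp ∘ swp = id := funext swp_swp
  rw [this, List.map_id]

/-- card of RF is symmetric in the sign of e -/
lemma RF_neg_card (e : ℤ) (b : ℕ) : (RF (-e) b).card = (RF e b).card := by
  refine Finset.card_bij' (fun w _ => w.map swp) (fun w _ => w.map swp) ?hi ?hj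
    (fun w _ => map_swp_invol w) (fun w _ => map_swp_invol w)
  · intro w hw
    rw [mem_RF] at hw ⊢
    obtain ⟨hl, hend, hne⟩ := hw
    have ll : (w.map swp).length = w.length := List.length_map _
    refine ⟨mem_lists.mpr (by rw [ll]; exact mem_lists.mp hl), ?_, ?_⟩
    · rw [ll, Zt_swp, hend]; try ring
    · intro t ht
      rw [ll] at ht
      rw [Zt_swp]
      have := hne t ht
      omega
  · intro w hw
    rw [mem_RF] at hw ⊢
    obtain ⟨hl, hend, hne⟩ := hw
    have ll : (w.map swp).length = w.length := List.length_map _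
    refine ⟨mem_lists.mpr (by rw [ll]; exact mem_lists.mp hl), ?_, ?_⟩
    · rw [ll, Zt_swp, hend]; try ring
    · intro t ht
      rw [ll] at ht
      rw [Zt_swp]
      have := hne t ht
      omega

/-- card of LF is symmetric in the sign of e -/
lemma LF_neg_card (e : ℤ) (i : ℕ) : (LF (-e) i).card = (LF e i).card := by
  refine Finset.card_bij' (fun w _ => w.map swp) (fun w _ => w.map swp) ?hi ?hj
    (fun w _ => map_swp_invol w) (fun w _ => map_swp_invol w)
  · intro w hw
    rw [mem_LF] at hw ⊢
    obtain ⟨hl, h0, he, hne⟩ := hw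
    have ll : (w.map swp).length = w.length := List.length_map _
    refine ⟨mem_lists.mpr (by rw [ll]; exact mem_lists.mp hl), ?_, ?_, ?_⟩
    · rw [ll, Zt_swp, h0]; try ring
    · rw [ll, Zt_swp, he]; try ring
    · intro t ht h1
      rw [ll] at ht
      rw [Zt_swp]
      have := hne t ht h1
      omega
  · intro w hw
    rw [mem_LF] at hw ⊢
    obtain ⟨hl, h0, he, hne⟩ := hw
    have ll : (w.map swp).length = w.length := List.length_map _
    refine ⟨mem_lists.mpr (by rw [ll]; exact mem_lists.mp hl), ?_, ?_, ?_⟩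
    · rw [ll, Zt_swp, h0]; try ring
    · rw [ll, Zt_swp, he]; try ring
    · intro t ht h1
      rw [ll] at ht
      rw [Zt_swp]
      have := hne t ht h1
      omega

/-- positive excursion cores: end at 2, never 0 in between -/
def QF (m : ℕ) : Finset (List XX) :=
  (lists m).filter (fun w => Zt w w.length = 2 ∧ ∀ t, t ≤ w.length → 1 ≤ t → Zt w t ≠ 0)

lemma mem_QF {m : ℕ} {w : List XX} :
    w ∈ QF m ↔ w ∈ lists m ∧ (Zt w w.length = 2 ∧ ∀ t, t ≤ w.length → 1 ≤ t → Zt w t ≠ 0) := by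
  unfold QF; exact Finset.mem_filter

/-- reverse-and-swap maps QF m bijectively onto RF (-2) m -/
lemma QF_card (m : ℕ) : (QF m).card = (RF (-2) m).card := by
  have key : ∀ (v : List XX) (t : ℕ), t ≤ v.length →
      Zt ((v.map swp).reverse) t = Zt v (v.length - t) - Zt v v.length := by
    intro v t ht
    have hl : (v.map swp).length = v.length := List.length_map _
    rw [Zt_reverse _ (by rw [hl]; exact ht), hl, Zt_swp, Zt_swp]
    ring
  have invol : ∀ v : List XX, (((v.map swp).reverse).map swp).reverse = v := by
    intro v
    rw [← List.map_reverse, List.reverse_reverse, map_swp_invol]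
  refine Finset.card_bij' (fun w _ => (w.map swp).reverse) (fun w _ => (w.map swp).reverse)
    ?hi ?hj (fun w _ => invol w) (fun w _ => invol w)
  · intro w hw
    rw [mem_QF] at hw
    rw [mem_RF]
    obtain ⟨hl, hend, hne⟩ := hw
    have ll : ((w.map swp).reverse).length = w.length := by
      rw [List.length_reverse, List.length_map]
    refine ⟨mem_lists.mpr (by rw [ll]; exact mem_lists.mp hl), ?_, ?_⟩
    · rw [ll, key w w.length le_rfl, Nat.sub_self, Zt_zero, hend]; norm_num
    · intro t ht
      rw [ll] at ht
      rw [key w t (le_of_lt ht), hend]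
      have := hne (w.length - t) (by omega) (by omega)
      omega
  · intro w hw
    rw [mem_RF] at hw
    rw [mem_QF]
    obtain ⟨hl, hend, hne⟩ := hw
    have ll : ((w.map swp).reverse).length = w.length := by
      rw [List.length_reverse, List.length_map]
    refine ⟨mem_lists.mpr (by rw [ll]; exact mem_lists.mp hl), ?_, ?_⟩
    · rw [ll, key w w.length le_rfl, Nat.sub_self, Zt_zero, hend]; ring
    · intro t ht h1
      rw [ll] at ht
      rw [key w t ht, hend]
      have := hne (w.length - t) (by omega)
      omega

lemma Zt_dd (s : ℕ) : Zt [((false, true) : XX), (false, true)] s = - min (s : ℤ) 2 := by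
  match s with
  | 0 => rfl
  | 1 => rfl
  | (k+2) =>
    rw [Zt_len_le _ (by simp)]
    push_cast
    rw [min_eq_right (by omega : (2:ℤ) ≤ (k:ℤ)+2)]
    decide

/-- structure of LF 2 i : last two steps forced down-steps -/
lemma LF_card (i : ℕ) (hi : 4 ≤ i) : (LF 2 i).card = (QF (i-2)).card := by
  have himg : LF 2 i = (QF (i-2)).image (fun w => w ++ [(false,true), (false,true)]) := by
    ext w₁
    rw [mem_LF, Finset.mem_image]
    constructor
    · rintro ⟨hl, h0, he, hne⟩
      have l1 : w₁.length = i := mem_lists.mp hl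
      rw [l1] at h0 he hne
      -- Z (i-1) = 1
      have s1 := Zt_step_abs w₁ (i-2)
      have s2 := Zt_step_abs w₁ (i-1)
      rw [show i - 2 + 1 = i - 1 by omega, abs_le] at s1
      rw [show i - 1 + 1 = i by omega, abs_le, h0] at s2
      have hZ1 : Zt w₁ (i-1) = 1 := by
        have := hne (i-1) (by omega) (by omega)
        omega
      -- last two elements are (false,true)
      have g1 : stp (w₁[i-2]'(by omega)) = -1 := by
        have := Zt_succ w₁ (show i - 2 < w₁.length by omega)
        rw [show i - 2 + 1 = i - 1 by omega, he, hZ1] at this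
        omega
      have g2 : stp (w₁[i-1]'(by omega)) = -1 := by
        have := Zt_succ w₁ (show i - 1 < w₁.length by omega)
        rw [show i - 1 + 1 = i by omega, h0, hZ1] at this
        omega
      rw [stp_eq_negone] at g1 g2
      refine ⟨w₁.take (i-2), ?_, ?_⟩
      · rw [mem_QF]
        have lt : (w₁.take (i-2)).length = i - 2 := by rw [List.length_take]; omega
        refine ⟨mem_lists.mpr lt, ?_, ?_⟩
        · rw [lt, Zt_take _ (by omega)]; exact he
        · intro t ht h1
          rw [lt] at ht
          rw [Zt_take _ (by omega)]
          exact hne t (by omega) h1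
      · -- w₁.take (i-2) ++ [d,d] = w₁
        have e1 := take_snoc w₁ (show i - 2 < w₁.length by omega)
        rw [show (i-2)+1 = i-1 by omega] at e1
        have e2 := take_snoc w₁ (show i - 1 < w₁.length by omega)
        rw [show (i-1)+1 = i by omega] at e2
        have e3 : w₁.take i = w₁ := by rw [← l1]; exact List.take_length
        rw [e3, e1, g1, g2, List.append_assoc] at e2
        exact e2.symm
    · rintro ⟨w, hw, rfl⟩
      rw [mem_QF] at hw
      obtain ⟨hl, hend, hne⟩ := hw
      have lw : w.length = i - 2 := mem_lists.mp hl
      rw [lw] at hend hne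
      have ltot : (w ++ [((false,true) : XX), (false,true)]).length = i := by
        rw [List.length_append, lw]; simp; omega
      have hZright : ∀ s, Zt (w ++ [((false,true) : XX), (false,true)]) (i - 2 + s)
          = 2 - min (s : ℤ) 2 := by
        intro s
        rw [show i - 2 + s = w.length + s by rw [lw], Zt_append_right, lw, hend, Zt_dd]
        ring
      have hZleft : ∀ t, t ≤ i - 2 → Zt (w ++ [((false,true) : XX), (false,true)]) t = Zt w t :=
        fun t ht => Zt_append_left _ _ (by omega)
      refine ⟨mem_lists.mpr ltot, ?_, ?_, ?_⟩
      · rw [ltot, show i = i - 2 + 2 by omega, hZright]; norm_num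
      · rw [ltot, show i - 2 = i - 2 + 0 by omega, hZright]; norm_num
      · intro t ht h1
        rw [ltot] at ht
        rcases le_or_gt t (i-2) with h | h
        · rw [hZleft t h]; exact hne t h h1
        · rw [show t = i - 2 + (t - (i-2)) by omega, hZright]
          have : t - (i - 2) = 1 := by omega
          rw [this]
          norm_num
  rw [himg, Finset.card_image_of_injOn]
  intro a _ b _ hab
  simpa using hab

/-- walks avoiding level 2 (weakly, including endpoints), ending at k -/
def KF (m : ℕ) (k : ℤ) : Finset (List XX) :=
  (lists m).filter (fun w => (∀ t, t ≤ w.length → Zt w t ≠ 2) ∧ Zt w w.length = k)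

lemma mem_KF {m : ℕ} {k : ℤ} {w : List XX} :
    w ∈ KF m k ↔ w ∈ lists m ∧ ((∀ t, t ≤ w.length → Zt w t ≠ 2) ∧ Zt w w.length = k) := by
  unfold KF; exact Finset.mem_filter

/-- the avoid set is empty for endpoints ≥ 2 -/
lemma KF_eq_empty {m : ℕ} {k : ℤ} (hk : 2 ≤ k) : KF m k = ∅ := by
  rw [Finset.eq_empty_iff_forall_notMem]
  intro w hw
  rw [mem_KF] at hw
  obtain ⟨hl, hav, hend⟩ := hw
  rcases eq_or_lt_of_le hk with h | h
  · exact hav w.length le_rfl (hend.trans h.symm)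
  · obtain ⟨r, _, hr2, hrz⟩ := Zt_ivt w (c := 2) (Nat.zero_le w.length)
      (by rw [Zt_zero]; norm_num) (by rw [hend]; omega)
    exact hav r hr2 hrz

lemma RF_card_eq_KF (b : ℕ) (hb : 1 ≤ b) : (RF 2 b).card = (KF (b-1) 1).card := by
  have himg : RF 2 b = (KF (b-1) 1).image (fun w => w ++ [(true, false)]) := by
    ext w'
    rw [mem_RF, Finset.mem_image]
    constructor
    · rintro ⟨hl, hend, hne⟩
      have l1 : w'.length = b := mem_lists.mp hl
      rw [l1] at hend hne
      have hav : ∀ t, t ≤ b - 1 → Zt w' t ≠ 2 := fun t ht => hne t (by omega)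
      have hZ1 : Zt w' (b-1) = 1 := by
        have s2 := Zt_step_abs w' (b-1)
        rw [show b - 1 + 1 = b by omega, abs_le, hend] at s2
        -- Zt w' (b-1) ∈ {1,2,3}, ≠ 2; if 3 then hits 2 earlier
        have h3 : ¬ (2 ≤ Zt w' (b-1)) := by
          intro h3
          rcases eq_or_lt_of_le h3 with h | h
          · exact hav (b-1) le_rfl h.symm
          · obtain ⟨r, _, hr2, hrz⟩ := Zt_ivt w' (c := 2) (Nat.zero_le (b-1))
              (by rw [Zt_zero]; norm_num) (by omega)
            exact hav r hr2 hrz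
        omega
      have g : stp (w'[b-1]'(by omega)) = 1 := by
        have := Zt_succ w' (show b - 1 < w'.length by omega)
        rw [show b - 1 + 1 = b by omega, hend, hZ1] at this
        omega
      rw [stp_eq_one] at g
      refine ⟨w'.take (b-1), ?_, ?_⟩
      · rw [mem_KF]
        have lt : (w'.take (b-1)).length = b - 1 := by rw [List.length_take]; omega
        refine ⟨mem_lists.mpr lt, ?_, ?_⟩
        · intro t ht
          rw [lt] at ht
          rw [Zt_take _ (by omega)]
          exact hav t ht
        · rw [lt, Zt_take _ le_rfl]; exact hZ1
      · have e2 := take_snoc w' (show b - 1 < w'.length by omega)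
        rw [show (b-1)+1 = b by omega] at e2
        have e3 : w'.take b = w' := by rw [← l1]; exact List.take_length
        rw [e3, g] at e2
        exact e2.symm
    · rintro ⟨w, hw, rfl⟩
      rw [mem_KF] at hw
      obtain ⟨hl, hav, hend⟩ := hw
      have lw : w.length = b - 1 := mem_lists.mp hl
      rw [lw] at hav hend
      have ltot : (w ++ [((true,false) : XX)]).length = b := by
        rw [List.length_append, lw]; simp; omega
      have hlast : Zt (w ++ [((true,false) : XX)]) b = 2 := by
        rw [show b = w.length + 1 by omega, Zt_append_right, lw, hend]
        decide
      refine ⟨mem_lists.mpr ltot, ?_, ?_⟩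
      · rw [ltot]; exact hlast
      · intro t ht
        rw [ltot] at ht
        rw [Zt_append_left _ _ (by omega)]
        exact hav t (by omega)
  rw [himg, Finset.card_image_of_injOn]
  intro a _ b _ hab
  simpa using hab

lemma Zt_one (a : XX) : Zt [a] 1 = stp a := by simp [Zt]

lemma KF_rec (m : ℕ) (k : ℤ) (hk : k ≠ 2) :
    (KF (m+1) k).card
      = (KF m (k-1)).card + 2 * (KF m k).card + (KF m (k+1)).card := by
  have himg : KF (m+1) k = (Finset.univ : Finset XX).biUnion
      (fun a => (KF m (k - stp a)).image (fun w => w ++ [a])) := by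
    ext w'
    rw [mem_KF, Finset.mem_biUnion]
    constructor
    · rintro ⟨hl, hav, hend⟩
      have l1 : w'.length = m + 1 := mem_lists.mp hl
      rw [l1] at hav hend
      have hm : m < w'.length := by omega
      have hZm : Zt w' m = k - stp (w'[m]'hm) := by
        have := Zt_succ w' hm
        rw [hend] at this
        omega
      refine ⟨w'[m]'hm, Finset.mem_univ _, ?_⟩
      rw [Finset.mem_image]
      refine ⟨w'.take m, ?_, ?_⟩
      · rw [mem_KF]
        have lt : (w'.take m).length = m := by rw [List.length_take]; omega
        refine ⟨mem_lists.mpr lt, ?_, ?_⟩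
        · intro t ht
          rw [lt] at ht
          rw [Zt_take _ ht]
          exact hav t (by omega)
        · rw [lt, Zt_take _ le_rfl]; exact hZm
      · have e2 := take_snoc w' hm
        have e3 : w'.take (m+1) = w' := by rw [← l1]; exact List.take_length
        rw [e3] at e2
        exact e2.symm
    · rintro ⟨a, _, hw⟩
      rw [Finset.mem_image] at hw
      obtain ⟨w, hw, rfl⟩ := hw
      rw [mem_KF] at hw
      obtain ⟨hl, hav, hend⟩ := hw
      have lw : w.length = m := mem_lists.mp hl
      rw [lw] at hav hend
      have ltot : (w ++ [a]).length = m + 1 := by rw [List.length_append, lw]; simp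
      have hZlast : Zt (w ++ [a]) (m+1) = k := by
        rw [show m + 1 = w.length + 1 by omega, Zt_append_right, lw, hend, Zt_one]
        ring
      refine ⟨mem_lists.mpr ltot, ?_, ?_⟩
      · intro t ht
        rw [ltot] at ht
        rcases Nat.lt_or_ge t (m+1) with h | h
        · rw [Zt_append_left _ _ (by omega)]
          exact hav t (by omega)
        · have : t = m + 1 := by omega
          rw [this, hZlast]
          exact hk
      · rw [ltot, hZlast]
  rw [himg, Finset.card_biUnion]
  · have himgcard : ∀ a : XX,
        ((KF m (k - stp a)).image (fun w => w ++ [a])).card = (KF m (k - stp a)).card := by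
      intro a
      apply Finset.card_image_of_injOn
      intro x _ y _ h
      simpa using h
    rw [Finset.sum_congr rfl (fun a _ => himgcard a), Fintype.sum_prod_type]
    rw [Fintype.sum_bool]
    rw [Fintype.sum_bool, Fintype.sum_bool]
    have v1 : stp ((true, true) : XX) = 0 := rfl
    have v2 : stp ((true, false) : XX) = 1 := rfl
    have v3 : stp ((false, true) : XX) = -1 := rfl
    have v4 : stp ((false, false) : XX) = 0 := rfl
    rw [v1, v2, v3, v4, show k - 0 = k by ring, show k - 1 = k - 1 from rfl,
      show k - (-1) = k + 1 by ring]
    ring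
  · intro a _ a' _ hne
    rw [Function.onFun, Finset.disjoint_left]
    rintro w hw hw'
    rw [Finset.mem_image] at hw hw'
    obtain ⟨x, hx, hxe⟩ := hw
    obtain ⟨y, hy, hye⟩ := hw'
    have lx : x.length = m := mem_lists.mp (mem_KF.mp hx).1
    have ly : y.length = m := mem_lists.mp (mem_KF.mp hy).1
    have := List.append_inj (hxe.trans hye.symm) (lx.trans ly.symm)
    apply hne
    have h2 := this.2
    simpa using h2

def ch (N : ℕ) (k : ℤ) : ℕ := if 0 ≤ k then N.choose k.toNat else 0

lemma ch_pascal (N : ℕ) (j : ℤ) :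
    ch (N+2) j = ch N j + 2 * ch N (j-1) + ch N (j-2) := by
  rcases lt_or_ge j 0 with h | h
  · rw [ch, ch, ch, ch, if_neg (by omega), if_neg (by omega), if_neg (by omega),
      if_neg (by omega)]
  rcases eq_or_lt_of_le h with rfl | h1
  · show ch (N+2) 0 = ch N 0 + 2 * ch N (-1) + ch N (-2)
    rw [ch, ch, ch, ch, if_pos le_rfl, if_pos le_rfl, if_neg (by omega), if_neg (by omega)]
    simp
  rcases eq_or_lt_of_le (show (1:ℤ) ≤ j by omega) with rfl | h2
  · show ch (N+2) 1 = ch N 1 + 2 * ch N 0 + ch N (-1)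
    rw [ch, ch, ch, ch, if_pos (by omega), if_pos (by omega), if_pos le_rfl,
      if_neg (by omega)]
    show (N+2).choose 1 = N.choose 1 + 2 * N.choose 0 + 0
    rw [Nat.choose_one_right, Nat.choose_one_right, Nat.choose_zero_right]
    try omega
  · obtain ⟨p, rfl⟩ : ∃ p : ℕ, j = (p:ℤ) + 2 := ⟨(j-2).toNat, by omega⟩
    rw [ch, ch, ch, ch, if_pos (by omega), if_pos (by omega), if_pos (by omega),
      if_pos (by omega)]
    have t1 : ((p:ℤ) + 2).toNat = p + 2 := by omega
    have t2 : ((p:ℤ) + 2 - 1).toNat = p + 1 := by omega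
    have t3 : ((p:ℤ) + 2 - 2).toNat = p := by omega
    rw [t1, t2, t3]
    have q1 : (N+2).choose (p+2) = (N+1).choose (p+1) + (N+1).choose (p+2) :=
      Nat.choose_succ_succ _ _
    have q2 : (N+1).choose (p+1) = N.choose p + N.choose (p+1) := Nat.choose_succ_succ _ _
    have q3 : (N+1).choose (p+2) = N.choose (p+1) + N.choose (p+2) := Nat.choose_succ_succ _ _
    omega

lemma KF_zero_card (k : ℤ) : (KF 0 k).card = if k = 0 then 1 else 0 := by
  rcases eq_or_ne k 0 with rfl | hne
  · rw [if_pos rfl]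
    have h : KF 0 0 = {([] : List XX)} := by
      ext w
      rw [mem_KF, Finset.mem_singleton]
      constructor
      · rintro ⟨hl, _, _⟩
        exact List.length_eq_zero_iff.mp (mem_lists.mp hl)
      · rintro rfl
        refine ⟨mem_lists.mpr rfl, ?_, rfl⟩
        intro t ht
        have : t = 0 := by simpa using ht
        subst this
        decide
    rw [h, Finset.card_singleton]
  · rw [if_neg hne]
    rw [Finset.card_eq_zero, Finset.eq_empty_iff_forall_notMem]
    intro w hw
    rw [mem_KF] at hw
    obtain ⟨hl, _, hend⟩ := hw
    have : w.length = 0 := mem_lists.mp hl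
    rw [this, Zt_zero] at hend
    exact hne hend.symm

lemma K_closed : ∀ m : ℕ, ∀ k : ℤ, k ≤ 2 →
    ((KF m k).card : ℤ) = (ch (2*m) (m + k) : ℤ) - (ch (2*m) (m + 4 - k) : ℤ) := by
  intro m
  induction m with
  | zero =>
    intro k hk
    rw [KF_zero_card]
    rcases eq_or_ne k 0 with rfl | hne
    · rw [if_pos rfl]
      show (1 : ℤ) = (ch 0 0 : ℤ) - (ch 0 4 : ℤ)
      rw [ch, ch, if_pos le_rfl, if_pos (by omega)]
      show (1 : ℤ) = ((Nat.choose 0 0 : ℕ) : ℤ) - ((Nat.choose 0 (4:ℤ).toNat : ℕ) : ℤ)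
      norm_num [show Nat.choose 0 ((4:ℤ).toNat) = 0 from rfl]
    · rw [if_neg hne]
      have h1 : (ch 0 (0 + k) : ℤ) = 0 := by
        rw [ch]
        split_ifs with h
        · rw [Nat.choose_eq_zero_of_lt (by omega)]
          norm_num
        · norm_num
      have h2 : (ch 0 ((0:ℕ) + 4 - k) : ℤ) = 0 := by
        rw [ch]
        split_ifs with h
        · rw [Nat.choose_eq_zero_of_lt (by omega)]
          norm_num
        · norm_num
      push_cast at h1 h2 ⊢
      omega
  | succ m ih =>
    intro k hk
    rcases eq_or_lt_of_le hk with rfl | hklt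
    · rw [KF_eq_empty le_rfl]
      rw [show ((m:ℕ)+1 : ℕ) + (4:ℤ) - 2 = ((m+1 : ℕ) : ℤ) + 2 by push_cast; ring]
      simp
    · have hk1 : k ≤ 1 := by omega
      rw [KF_rec m k (by omega)]
      have i1 := ih (k-1) (by omega)
      have i2 := ih k (by omega)
      have i3 := ih (k+1) (by omega)
      rw [show ((m:ℤ) + (k-1)) = (m:ℤ) + k - 1 by ring,
        show ((m:ℤ) + 4 - (k-1)) = (m:ℤ) + 5 - k by ring] at i1
      rw [show ((m:ℤ) + (k+1)) = (m:ℤ) + k + 1 by ring,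
        show ((m:ℤ) + 4 - (k+1)) = (m:ℤ) + 3 - k by ring] at i3
      have p1 := ch_pascal (2*m) ((m:ℤ) + k + 1)
      have p2 := ch_pascal (2*m) ((m:ℤ) + 5 - k)
      rw [show ((m:ℤ) + k + 1 - 1) = (m:ℤ) + k by ring,
        show ((m:ℤ) + k + 1 - 2) = (m:ℤ) + k - 1 by ring] at p1
      rw [show ((m:ℤ) + 5 - k - 1) = (m:ℤ) + 4 - k by ring,
        show ((m:ℤ) + 5 - k - 2) = (m:ℤ) + 3 - k by ring] at p2
      rw [show 2*(m+1) = 2*m+2 by ring,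
        show (((m:ℕ)+1 : ℕ) : ℤ) + k = (m:ℤ) + k + 1 by push_cast; ring,
        show (((m:ℕ)+1 : ℕ) : ℤ) + 4 - k = (m:ℤ) + 5 - k by push_cast; ring]
      push_cast
      omega

lemma RF2_card_int (b : ℕ) (hb : 1 ≤ b) :
    ((RF 2 b).card : ℤ) = ((2*(b-1)).choose b : ℤ) - ((2*(b-1)).choose (b+2) : ℤ) := by
  rw [RF_card_eq_KF b hb, K_closed (b-1) 1 (by omega)]
  congr 1
  · rw [ch, if_pos (by omega), show ((((b-1):ℕ):ℤ) + 1).toNat = b by omega]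
  · rw [ch, if_pos (by omega), show ((((b-1):ℕ):ℤ) + 4 - 1).toNat = b + 2 by omega]

lemma vdm (b : ℕ) :
    ∑ l ∈ Finset.Icc 2 b, (b.choose l) * (b.choose (l-2)) = (2*b).choose (b+2) := by
  rw [two_mul, Nat.add_choose_eq, Finset.Nat.sum_antidiagonal_eq_sum_range_succ_mk]
  rw [← Finset.sum_subset (show Finset.Icc 2 b ⊆ Finset.range (b+2+1) by
    intro x hx
    rw [Finset.mem_Icc] at hx
    rw [Finset.mem_range]
    omega)]
  · apply Finset.sum_congr rfl
    intro l hl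
    rw [Finset.mem_Icc] at hl
    rw [show b + 2 - l = b - (l - 2) by omega, Nat.choose_symm (show l - 2 ≤ b by omega)]
  · intro x hx hnx
    rw [Finset.mem_range] at hx
    rw [Finset.mem_Icc] at hnx
    push_neg at hnx
    rcases Nat.lt_or_ge x 2 with h | h
    · rw [Nat.choose_eq_zero_of_lt (show b < b + 2 - x by omega)]
      simp
    · rw [Nat.choose_eq_zero_of_lt (show b < x by exact hnx h)]
      simp

lemma key_nat (b : ℕ) (hb : 2 ≤ b) :
    b * (2*(b-1)).choose b = 2 * ((2*b).choose (b+2)) + b * (2*(b-1)).choose (b+2) := by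
  rcases Nat.lt_or_ge b 4 with h | h
  · interval_cases b <;> decide
  · obtain ⟨a, rfl⟩ : ∃ a, b = a + 4 := ⟨b - 4, by omega⟩
    have h1 : a + 4 ≤ 2*(a+4-1) := by omega
    have h2 : a + 4 + 2 ≤ 2*(a+4-1) := by omega
    have h3 : a + 4 + 2 ≤ 2*(a+4) := by omega
    have goalQ : ((a+4 : ℕ) : ℚ) * ((2*(a+4-1)).choose (a+4) : ℚ)
        = 2 * (((2*(a+4)).choose (a+4+2)) : ℚ) + ((a+4 : ℕ) : ℚ) * ((2*(a+4-1)).choose (a+4+2) : ℚ) := by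
      rw [Nat.cast_choose ℚ h1, Nat.cast_choose ℚ h2, Nat.cast_choose ℚ h3]
      rw [show 2*(a+4-1) = 2*a+6 by omega, show 2*(a+4) = 2*a+8 by omega,
        show a+4+2 = a+6 by omega, show 2*a+6 - (a+4) = a+2 by omega,
        show 2*a+6 - (a+6) = a by omega, show 2*a+8 - (a+6) = a+2 by omega]
      have f1 : ((a+2).factorial : ℚ) = (a+2)*(a+1)*(a.factorial : ℚ) := by
        rw [show a+2 = (a+1)+1 by ring, Nat.factorial_succ, show a+1 = a+1 from rfl,
          Nat.factorial_succ]
        push_cast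
        ring
      have f2 : ((a+4).factorial : ℚ) = (a+4)*(a+3)*((a+2).factorial : ℚ) := by
        rw [show a+4 = (a+3)+1 by ring, Nat.factorial_succ, show a+3 = (a+2)+1 by ring,
          Nat.factorial_succ]
        push_cast
        ring
      have f3 : ((a+6).factorial : ℚ) = (a+6)*(a+5)*((a+4).factorial : ℚ) := by
        rw [show a+6 = (a+5)+1 by ring, Nat.factorial_succ, show a+5 = (a+4)+1 by ring,
          Nat.factorial_succ]
        push_cast
        ring
      have f4 : ((2*a+8).factorial : ℚ) = (2*a+8)*(2*a+7)*((2*a+6).factorial : ℚ) := by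
        rw [show 2*a+8 = (2*a+7)+1 by ring, Nat.factorial_succ, show 2*a+7 = (2*a+6)+1 by ring,
          Nat.factorial_succ]
        push_cast
        ring
      rw [f4, f3, f2, f1]
      have nz1 : (a.factorial : ℚ) ≠ 0 := by exact_mod_cast a.factorial_ne_zero
      have nz2 : ((2*a+6).factorial : ℚ) ≠ 0 := by exact_mod_cast (2*a+6).factorial_ne_zero
      field_simp
      push_cast
      ring
    exact_mod_cast goalQ

/-- the main per-length evaluation : for b ≥ 2 -/
lemma RF2_card_rat (b : ℕ) (hb : 2 ≤ b) :
    ((RF 2 b).card : ℚ) = 2 / b * ((2*b).choose (b+2) : ℚ) := by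
  have h1 := RF2_card_int b (by omega)
  have h2 := key_nat b hb
  have hbQ : (b:ℚ) ≠ 0 := Nat.cast_ne_zero.mpr (by omega)
  have h1Q : ((RF 2 b).card : ℚ)
      = ((2*(b-1)).choose b : ℚ) - ((2*(b-1)).choose (b+2) : ℚ) := by exact_mod_cast h1
  have h2Q : (b:ℚ) * ((2*(b-1)).choose b : ℚ)
      = 2 * ((2*b).choose (b+2) : ℚ) + (b:ℚ) * ((2*(b-1)).choose (b+2) : ℚ) := by
    exact_mod_cast h2
  rw [h1Q]
  field_simp
  linear_combination h2Q

lemma Zt_nil (t : ℕ) : Zt [] t = 0 := by simp [Zt]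

lemma Zt_cons (p : XX) (w : List XX) (t : ℕ) : Zt (p :: w) (t+1) = stp p + Zt w t := by
  simp [Zt, List.take_succ_cons]

lemma count_tf (l : List Bool) : l.count true + l.count false = l.length := by
  induction l with
  | nil => rfl
  | cons a l ih => rcases a <;> simp [List.count_cons] <;> omega

lemma count_split (l : List Bool) (s : ℕ) :
    (l.take s).count true + (l.drop s).count true = l.count true := by
  conv_rhs => rw [← List.take_append_drop s l]
  rw [List.count_append]

lemma count_rev_take (u : List Bool) (t : ℕ) :
    (u.reverse.take t).count true = (u.drop (u.length - t)).count true := by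
  rw [List.take_reverse, List.count_reverse]

lemma zipZ : ∀ (x : List Bool) (y : List Bool), x.length = y.length → ∀ t,
    Zt (x.zip y) t = ((x.take t).count true : ℤ) - ((y.take t).count true : ℤ) := by
  intro x
  induction x with
  | nil =>
    intro y hy t
    have : y = [] := by simpa [List.length_eq_zero_iff] using hy.symm
    subst this
    simp [Zt_nil]
  | cons a x ih =>
    intro y hy t
    rcases y with _ | ⟨b, y⟩
    · simp at hy
    · rcases t with _ | t
      · simp [Zt_zero]
      · have hxy : x.length = y.length := by simpa using hy
        rw [List.zip_cons_cons, Zt_cons, ih y hxy t]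
        rcases a <;> rcases b <;>
          simp [List.count_cons, stp] <;> push_cast <;> ring

lemma abEq_length {x y : List Bool} (h : AbEq x y) : x.length = y.length := by
  rw [← count_tf x, ← count_tf y, h.1, h.2]

lemma abEq_iff_of_length {x y : List Bool} (h : x.length = y.length) :
    AbEq x y ↔ x.count true = y.count true := by
  constructor
  · exact fun h' => h'.1
  · intro hc
    refine ⟨hc, ?_⟩
    have h1 := count_tf x
    have h2 := count_tf y
    omega

lemma hasIntB_iff {n : ℕ} (hn : 1 ≤ n) {u v : List Bool}
    (hu : u.length = n) (hv : v.length = n) :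
    HasIntB u v ↔ ∃ t, 1 ≤ t ∧ t ≤ n - 1 ∧ AbEq (u.drop (n - t)) (v.take t) := by
  constructor
  · rintro ⟨x, y, hx0, hxu, hxsuf, hypre, hyv, hab⟩
    refine ⟨x.length, ?_, ?_, ?_⟩
    · exact List.length_pos_iff.mpr hx0
    · have hle : x.length ≤ u.length := List.IsSuffix.length_le hxsuf
      have : x.length ≠ u.length := fun h => hxu (List.IsSuffix.eq_of_length hxsuf h)
      omega
    · have hx : x = u.drop (u.length - x.length) := List.suffix_iff_eq_drop.mp hxsuf
      have hy : y = v.take y.length := List.prefix_iff_eq_take.mp hypre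
      have hxy : x.length = y.length := abEq_length hab
      rw [hu] at hx
      rw [← hx, hxy, ← hy]
      exact hab
  · rintro ⟨t, h1, h2, hab⟩
    refine ⟨u.drop (n - t), v.take t, ?_, ?_, ?_, List.take_prefix _ _, ?_, hab⟩
    · have hlen : (u.drop (n - t)).length = t := by rw [List.length_drop]; omega
      intro h
      rw [h] at hlen
      simp at hlen
      omega
    · intro h
      have := congrArg List.length h
      rw [List.length_drop] at this
      omega
    · rw [show n - t = u.length - t by omega]
      exact List.drop_suffix _ _
    · intro h
      have := congrArg List.length h
      rw [List.length_take] at this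
      have : t ≥ n := by rw [hv] at this; omega
      omega

lemma hasExtB_iff {u v : List Bool} : HasExtB u v ↔ HasIntB v u := by
  constructor
  · rintro ⟨x, y, hx0, hxu, hxpre, hysuf, hyv, hab⟩
    have hy0 : y ≠ [] := by
      intro h
      subst h
      have := abEq_length hab
      simp at this
      exact hx0 this
    exact ⟨y, x, hy0, hyv, hysuf, hxpre, hxu, ⟨hab.1.symm, hab.2.symm⟩⟩
  · rintro ⟨y, x, hy0, hyv, hysuf, hxpre, hxu, hab⟩
    have hx0 : x ≠ [] := by
      intro h
      subst h
      have := abEq_length hab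
      simp at this
      exact hy0 this
    exact ⟨x, y, hx0, hxu, hxpre, hysuf, hyv, ⟨hab.1.symm, hab.2.symm⟩⟩

lemma zip_fst_snd : ∀ w : List XX, (w.map Prod.fst).zip (w.map Prod.snd) = w := by
  intro w
  induction w with
  | nil => rfl
  | cons p w ih => simp [ih]

section CondIff

variable {n : ℕ} {u v : List Bool}

lemma cond_iff (hn : 2 ≤ n) (hu : u.length = n) (hv : v.length = n) :
    (MAB u v ∧ lsb u v + lsb v u = n + 2) ↔ (v.zip u.reverse) ∈ PF n := by
  have hrl : u.reverse.length = n := by rw [List.length_reverse, hu]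
  have hwlen : (v.zip u.reverse).length = n := by
    rw [List.length_zip, hv, hrl, min_self]
  have hZ : ∀ t, t ≤ n → Zt (v.zip u.reverse) t
      = ((v.take t).count true : ℤ) - ((u.drop (n - t)).count true : ℤ) := by
    intro t _
    rw [zipZ v u.reverse (by rw [hv, hrl]) t, count_rev_take, hu]
  have d1 : ∀ t, t ≤ n - 1 →
      (AbEq (u.drop (n - t)) (v.take t) ↔ Zt (v.zip u.reverse) t = 0) := by
    intro t ht
    rw [hZ t (by omega)]
    have hl : (u.drop (n - t)).length = t := by rw [List.length_drop, hu]; omega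
    have hl2 : (v.take t).length = t := by rw [List.length_take, hv]; omega
    rw [abEq_iff_of_length (by rw [hl, hl2])]
    omega
  have d2 : ∀ t, 1 ≤ t → t ≤ n - 1 →
      (AbEq (v.drop (n - t)) (u.take t) ↔
        Zt (v.zip u.reverse) (n - t) = Zt (v.zip u.reverse) n) := by
    intro t h1 h2
    rw [hZ (n - t) (by omega), hZ n (by omega)]
    have e1 : (v.take n).count true = v.count true := by
      rw [List.take_of_length_le (by omega)]
    have e2 : u.drop (n - n) = u := by rw [Nat.sub_self, List.drop_zero]
    have e3 : n - (n - t) = t := by omega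
    rw [e1, e2, e3]
    have s1 := count_split v (n - t)
    have s2 := count_split u t
    have hl : (v.drop (n - t)).length = t := by rw [List.length_drop, hv]; omega
    have hl2 : (u.take t).length = t := by rw [List.length_take, hu]; omega
    rw [abEq_iff_of_length (by rw [hl, hl2])]
    omega
  have setT : {t | 1 ≤ t ∧ t ≤ u.length - 1 ∧ AbEq (u.drop (u.length - t)) (v.take t)}
      = {t | 1 ≤ t ∧ t ≤ n - 1 ∧ Zt (v.zip u.reverse) t = 0} := by
    ext t
    simp only [Set.mem_setOf_eq, hu]
    constructor
    · rintro ⟨a, b, c⟩; exact ⟨a, b, (d1 t b).mp c⟩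
    · rintro ⟨a, b, c⟩; exact ⟨a, b, (d1 t b).mpr c⟩
  have setU : {t | 1 ≤ t ∧ t ≤ v.length - 1 ∧ AbEq (v.drop (v.length - t)) (u.take t)}
      = {t | 1 ≤ t ∧ t ≤ n - 1 ∧
          Zt (v.zip u.reverse) (n - t) = Zt (v.zip u.reverse) n} := by
    ext t
    simp only [Set.mem_setOf_eq, hv]
    constructor
    · rintro ⟨a, b, c⟩; exact ⟨a, b, (d2 t a b).mp c⟩
    · rintro ⟨a, b, c⟩; exact ⟨a, b, (d2 t a b).mpr c⟩
  have hMAB : MAB u v ↔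
      ((∃ t, 1 ≤ t ∧ t ≤ n - 1 ∧ Zt (v.zip u.reverse) t = 0) ∧
       (∃ t, 1 ≤ t ∧ t ≤ n - 1 ∧
          Zt (v.zip u.reverse) (n - t) = Zt (v.zip u.reverse) n)) := by
    unfold MAB
    rw [hasExtB_iff]
    rw [hasIntB_iff (by omega) hu hv, hasIntB_iff (by omega) hv hu]
    constructor
    · rintro ⟨⟨t, a, b, c⟩, ⟨s, a', b', c'⟩⟩
      exact ⟨⟨t, a, b, (d1 t b).mp c⟩, ⟨s, a', b', (d2 s a' b').mp c'⟩⟩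
    · rintro ⟨⟨t, a, b, c⟩, ⟨s, a', b', c'⟩⟩
      exact ⟨⟨t, a, b, (d1 t b).mpr c⟩, ⟨s, a', b', (d2 s a' b').mpr c'⟩⟩
  have hlsb1 : lsb u v = sInf {t | 1 ≤ t ∧ t ≤ n - 1 ∧ Zt (v.zip u.reverse) t = 0} := by
    unfold lsb
    rw [setT]
  have hlsb2 : lsb v u = sInf {t | 1 ≤ t ∧ t ≤ n - 1 ∧
      Zt (v.zip u.reverse) (n - t) = Zt (v.zip u.reverse) n} := by
    unfold lsb
    rw [setU]
  rw [mem_PF, hMAB, hlsb1, hlsb2]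
  constructor
  · rintro ⟨⟨h1, h2⟩, h3⟩
    exact ⟨mem_lists.mpr hwlen, h1, h2, h3⟩
  · rintro ⟨_, h1, h2, h3⟩
    exact ⟨⟨h1, h2⟩, h3⟩

end CondIff

lemma setA_ncard (n : ℕ) (hn : 2 ≤ n) :
    ({p : List Bool × List Bool | p.1.length = n ∧ p.2.length = n ∧ MAB p.1 p.2 ∧
        lsb p.1 p.2 + lsb p.2 p.1 = n + 2}).ncard = (PF n).card := by
  have hinj : Function.Injective
      (fun w : List XX => ((w.map Prod.snd).reverse, w.map Prod.fst)) := by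
    intro w w' h
    have h1 : (w.map Prod.snd).reverse = (w'.map Prod.snd).reverse := congrArg Prod.fst h
    have h2 : w.map Prod.fst = w'.map Prod.fst := congrArg Prod.snd h
    have h1' : w.map Prod.snd = w'.map Prod.snd := by
      have := congrArg List.reverse h1
      simpa using this
    clear h1
    rw [← zip_fst_snd w, ← zip_fst_snd w', h1', h2]
  have himg : {p : List Bool × List Bool | p.1.length = n ∧ p.2.length = n ∧ MAB p.1 p.2 ∧
        lsb p.1 p.2 + lsb p.2 p.1 = n + 2}
      = (fun w : List XX => ((w.map Prod.snd).reverse, w.map Prod.fst)) '' ↑(PF n) := by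
    ext ⟨u, v⟩
    simp only [Set.mem_setOf_eq, Set.mem_image, Finset.mem_coe]
    constructor
    · rintro ⟨hu, hv, hc1, hc2⟩
      refine ⟨v.zip u.reverse, (cond_iff hn hu hv).mp ⟨hc1, hc2⟩, ?_⟩
      have hlen : u.reverse.length ≤ v.length := by rw [List.length_reverse, hu, hv]
      have hlen2 : v.length ≤ u.reverse.length := by rw [List.length_reverse, hu, hv]
      rw [List.map_snd_zip hlen, List.map_fst_zip hlen2, List.reverse_reverse]
    · rintro ⟨w, hw, hweq⟩
      have hwlen : w.length = n := mem_lists.mp (mem_PF.mp hw).1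
      have hu' : (w.map Prod.snd).reverse = u := congrArg Prod.fst hweq
      have hv' : w.map Prod.fst = v := congrArg Prod.snd hweq
      have hu : u.length = n := by rw [← hu']; simp [hwlen]
      have hv : v.length = n := by rw [← hv']; simp [hwlen]
      have hzip : v.zip u.reverse = w := by
        rw [← hu', ← hv', List.reverse_reverse, zip_fst_snd]
      have := (cond_iff hn hu hv).mpr (by rw [hzip]; exact hw)
      exact ⟨hu, hv, this.1, this.2⟩
  rw [himg, Set.ncard_image_of_injective _ hinj, Set.ncard_coe_finset]

lemma PF_card2 (n : ℕ) :
    (PF n).card = ∑ i ∈ Finset.Icc 4 (n-2),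
      2 * ((RF 2 (i-2)).card * (RF 2 (n-i)).card) := by
  rw [PF_card]
  apply Finset.sum_congr rfl
  intro i hi
  rw [Finset.mem_Icc] at hi
  have h1 : (LF 2 i).card = (RF 2 (i-2)).card := by
    rw [LF_card i hi.1, QF_card, RF_neg_card 2 (i-2)]
  have h2 : (LF (-2) i).card = (RF 2 (i-2)).card := by
    rw [LF_neg_card 2 i]
    exact h1
  have h3 : (RF (-2) (n-i)).card = (RF 2 (n-i)).card := RF_neg_card 2 (n-i)
  rw [h1, h2, h3]
  ring

lemma inner_eval (n i : ℕ) (hi : i ∈ Finset.Icc 4 (n-2)) :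
    ∑ l ∈ Finset.Icc 2 (n - i), ∑ m ∈ Finset.Icc (l + 2) (i + l - 2),
        (4 / (((i - 2) * (n - i) : ℕ) : ℚ)) *
          ((n - i).choose l : ℚ) * ((n - i).choose (l - 2) : ℚ) *
          ((i - 2).choose (m - l) : ℚ) * ((i - 2).choose (m - l - 2) : ℚ)
    = ((RF 2 (i-2)).card : ℚ) * ((RF 2 (n-i)).card : ℚ) := by
  rw [Finset.mem_Icc] at hi
  have hn6 : 6 ≤ n := by omega
  have hb : 2 ≤ n - i := by omega
  have hm : 2 ≤ i - 2 := by omega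
  have hinner : ∀ l, (∑ m ∈ Finset.Icc (l + 2) (i + l - 2),
      (4 / (((i - 2) * (n - i) : ℕ) : ℚ)) *
        ((n - i).choose l : ℚ) * ((n - i).choose (l - 2) : ℚ) *
        ((i - 2).choose (m - l) : ℚ) * ((i - 2).choose (m - l - 2) : ℚ))
      = (((n - i).choose l : ℚ) * ((n - i).choose (l - 2) : ℚ)) *
        ∑ j ∈ Finset.Icc 2 (i - 2),
          (4 / (((i - 2) * (n - i) : ℕ) : ℚ)) *
          ((i - 2).choose j : ℚ) * ((i - 2).choose (j - 2) : ℚ) := by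
    intro l
    rw [show Finset.Icc (l+2) (i+l-2) = Finset.map (addLeftEmbedding l) (Finset.Icc 2 (i-2))
        by rw [Finset.map_add_left_Icc]; congr 1; omega,
      Finset.sum_map, Finset.mul_sum]
    apply Finset.sum_congr rfl
    intro j hj
    rw [Finset.mem_Icc] at hj
    have e1 : (addLeftEmbedding l) j = l + j := rfl
    rw [e1, show l + j - l = j by omega]
    ring
  rw [Finset.sum_congr rfl (fun l _ => hinner l), ← Finset.sum_mul]
  have hv1 : ∑ l ∈ Finset.Icc 2 (n-i), (((n - i).choose l : ℚ) * ((n - i).choose (l - 2) : ℚ))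
      = (((2*(n-i)).choose ((n-i)+2) : ℕ) : ℚ) := by
    rw [← vdm (n-i)]
    push_cast
    rfl
  have hv2 : ∑ j ∈ Finset.Icc 2 (i-2),
      (4 / (((i - 2) * (n - i) : ℕ) : ℚ)) * ((i - 2).choose j : ℚ) * ((i - 2).choose (j - 2) : ℚ)
      = (4 / (((i - 2) * (n - i) : ℕ) : ℚ)) * (((2*(i-2)).choose ((i-2)+2) : ℕ) : ℚ) := by
    rw [← vdm (i-2)]
    push_cast
    rw [Finset.mul_sum]
    apply Finset.sum_congr rfl
    intro j _
    ring
  rw [hv1, hv2, RF2_card_rat (i-2) hm, RF2_card_rat (n-i) hb]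
  have hx : (((i-2) : ℕ) : ℚ) ≠ 0 := Nat.cast_ne_zero.mpr (by omega)
  have hy : (((n-i) : ℕ) : ℚ) ≠ 0 := Nat.cast_ne_zero.mpr (by omega)
  rw [Nat.cast_mul]
  field_simp
  ring

theorem stmt_8 (n : ℕ) (hn : 2 ≤ n) :
    ({p : List Bool × List Bool | p.1.length = n ∧ p.2.length = n ∧ MAB p.1 p.2 ∧
        lsb p.1 p.2 + lsb p.2 p.1 = n + 2}.ncard : ℚ)
      = 2 * ∑ i ∈ Finset.Icc 4 (n - 2), ∑ l ∈ Finset.Icc 2 (n - i),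
          ∑ m ∈ Finset.Icc (l + 2) (i + l - 2),
            (4 / (((i - 2) * (n - i) : ℕ) : ℚ)) *
              ((n - i).choose l : ℚ) * ((n - i).choose (l - 2) : ℚ) *
              ((i - 2).choose (m - l) : ℚ) * ((i - 2).choose (m - l - 2) : ℚ) := by
  rw [setA_ncard n hn, PF_card2 n, Nat.cast_sum, Finset.mul_sum]
  apply Finset.sum_congr rfl
  intro i hi
  rw [inner_eval n i hi]
  push_cast
  ring
end

section
/- Let s, L, l1, l2, k be integers with l2 < l1 and L ≥ 2, and consider the points B1 = (l2, s − l2), B2 = (l1, s − l1) and C = (k, s + L − k) in ℤ×ℤ. Let w and p be binary words of length L such that the lattice path of w from B1 ends at C and the lattice path of p from B2 ends at C. Suppose that the paths P_{B1}(w) and P_{B2}(p) have only the point C in common, and that the paths P_{B2}(p) and P_{B2}(w) have only the point B2 in common. Then w begins and ends with the letter a (w = a z a for some possibly empty word z) and p begins and ends with the letter b (p = b z' b for some possibly empty word z'). -/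
/-!
Each letter moves a lattice path one antidiagonal `x + y = const` further, and `B1`, `B2` lie on
a common antidiagonal, so two of our paths can meet only at equal times `t`. In terms of the
excess `g t = |p_t|_a - |w_t|_a`, the paths of `w` from `B1` and of `p` from `B2` meet at time `t`
iff `g t = l2 - l1`, and the paths of `p` and `w` from `B2` iff `g t = 0`. Now `g` drops by at
most one per step, `g 0 = 0 > l2 - l1 = g L`, `g` avoids `l2 - l1` before time `L` and avoids `0`
after time `0`. Hence `g` stays above `l2 - l1` up to time `L - 1` and must drop at the last step,
and `g` is already negative at time `1`, so it drops at the first step as well. A drop of `g`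
happens exactly when `w` reads `a` and `p` reads `b`.
-/

/-- The point of the lattice path of the binary word `w` started at `A` after
`t` steps: `A + (|w_t|_a, |w_t|_b)` where `w_t` is the prefix of `w` of length
`t`.  The alphabet `{a, b}` is encoded by `Bool` with `a = true`, `b = false`. -/
def pathPt (A : ℤ × ℤ) (w : List Bool) (t : ℕ) : ℤ × ℤ :=
  (A.1 + ((w.take t).count true : ℤ), A.2 + ((w.take t).count false : ℤ))

/-- `P` is a common point of the lattice path of `w` from `A` and the lattice
path of `p` from `B`. -/
def CommonPt (A B : ℤ × ℤ) (w p : List Bool) (P : ℤ × ℤ) : Prop :=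
  (∃ t ≤ w.length, pathPt A w t = P) ∧ (∃ t ≤ p.length, pathPt B p t = P)

theorem lt_of_forall_ne_of_sub_one_le {f : ℕ → ℤ} {c : ℤ} {m n : ℕ} (hmn : m ≤ n)
    (hstep : ∀ t, m ≤ t → t < n → f t - 1 ≤ f (t + 1)) (hne : ∀ t, m ≤ t → t ≤ n → f t ≠ c)
    (hm : c < f m) : c < f n := by
  induction n, hmn using Nat.le_induction with
  | base => exact hm
  | succ n hmn ih =>
    have hn := ih (fun t h₁ h₂ => hstep t h₁ (by omega)) (fun t h₁ h₂ => hne t h₁ (by omega))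
    have := hstep n hmn (by omega)
    have := hne (n + 1) (by omega) le_rfl
    omega

theorem List.exists_eq_cons_append_singleton {α : Type*} {l : List α} {a : α} {n : ℕ}
    (hl : l.length = n + 2) (h₀ : l[0] = a) (hlast : l[n + 1] = a) :
    ∃ z, l = a :: z ++ [a] := by
  obtain _ | ⟨x, r⟩ := l
  · simp at hl
  obtain rfl | ⟨z, y, rfl⟩ := r.eq_nil_or_concat'
  · simp at hl
  obtain rfl : z.length = n := by simpa using hl
  simp only [List.getElem_cons_zero, List.getElem_cons_succ, List.getElem_concat_length] at h₀ hlast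
  exact ⟨z, by rw [h₀, hlast]; rfl⟩

theorem List.count_true_take_add_one {w : List Bool} {t : ℕ} (ht : t < w.length) :
    (w.take (t + 1)).count true = (w.take t).count true + w[t].toNat := by
  rw [List.take_add_one, List.getElem?_eq_getElem ht, List.count_append]
  cases w[t] <;> simp

def aExcess (p w : List Bool) (t : ℕ) : ℤ := (p.take t).count true - (w.take t).count true

section

variable {A B : ℤ × ℤ} {w p : List Bool} {t : ℕ}

@[simp]
theorem aExcess_zero : aExcess p w 0 = 0 := by
  simp [aExcess]

theorem aExcess_add_one (hp : t < p.length) (hw : t < w.length) :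
    aExcess p w (t + 1) = aExcess p w t + p[t].toNat - w[t].toNat := by
  simp only [aExcess, List.count_true_take_add_one hp, List.count_true_take_add_one hw]
  push_cast
  ring

theorem sub_one_le_aExcess_add_one (hp : t < p.length) (hw : t < w.length) :
    aExcess p w t - 1 ≤ aExcess p w (t + 1) := by
  rw [aExcess_add_one hp hw]
  have := Bool.toNat_le w[t]
  omega

theorem aExcess_add_one_lt_iff (hp : t < p.length) (hw : t < w.length) :
    aExcess p w (t + 1) < aExcess p w t ↔ w[t] = true ∧ p[t] = false := by
  rw [aExcess_add_one hp hw]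
  cases w[t] <;> cases p[t] <;> simp

@[simp]
theorem pathPt_zero (A : ℤ × ℤ) (w : List Bool) : pathPt A w 0 = A := by
  simp [pathPt]

theorem pathPt_fst_add_snd (A : ℤ × ℤ) (ht : t ≤ w.length) :
    (pathPt A w t).1 + (pathPt A w t).2 = A.1 + A.2 + t := by
  have := (w.take t).count_true_add_count_false
  rw [List.length_take_of_le ht] at this
  simp only [pathPt]
  omega

theorem eq_of_pathPt_eq_pathPt (hAB : A.1 + A.2 = B.1 + B.2) {u : ℕ} (ht : t ≤ w.length)
    (hu : u ≤ p.length) (h : pathPt A w t = pathPt B p u) : t = u := by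
  have := congrArg (fun P : ℤ × ℤ => P.1 + P.2) h
  simp only [pathPt_fst_add_snd A ht, pathPt_fst_add_snd B hu] at this
  omega

theorem pathPt_eq_pathPt_iff (hAB : A.1 + A.2 = B.1 + B.2) (hw : t ≤ w.length)
    (hp : t ≤ p.length) : pathPt A w t = pathPt B p t ↔ aExcess p w t = A.1 - B.1 := by
  have hwt := pathPt_fst_add_snd A hw
  have hpt := pathPt_fst_add_snd B hp
  simp only [pathPt, aExcess, Prod.ext_iff] at hwt hpt ⊢
  omega

theorem aExcess_ne_of_forall_commonPt_eq (hAB : A.1 + A.2 = B.1 + B.2) {u : ℕ}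
    (hw : t ≤ w.length) (hp : t ≤ p.length) (hu : u ≤ p.length) (htu : t ≠ u)
    (honly : ∀ P, CommonPt A B w p P → P = pathPt B p u) : aExcess p w t ≠ A.1 - B.1 := by
  intro h
  have hP := (pathPt_eq_pathPt_iff hAB hw hp).2 h
  exact htu (eq_of_pathPt_eq_pathPt hAB hw hu
    (honly _ ⟨⟨t, hw, rfl⟩, ⟨t, hp, hP.symm⟩⟩))

end

theorem stmt_10 (s l1 l2 k : ℤ) (L : ℕ) (hl : l2 < l1) (hL : 2 ≤ L)
    (B1 B2 C : ℤ × ℤ)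
    (hB1 : B1 = (l2, s - l2)) (hB2 : B2 = (l1, s - l1)) (hC : C = (k, s + L - k))
    (w p : List Bool) (hwL : w.length = L) (hpL : p.length = L)
    (hwC : pathPt B1 w L = C) (hpC : pathPt B2 p L = C)
    (honly1 : ∀ P, CommonPt B1 B2 w p P → P = C)
    (honly2 : ∀ P, CommonPt B2 B2 p w P → P = B2) :
    (∃ z : List Bool, w = true :: z ++ [true]) ∧
    (∃ z' : List Bool, p = false :: z' ++ [false]) := by
  subst hB1 hB2 hC
  obtain ⟨n, rfl⟩ : ∃ n, L = n + 2 := ⟨L - 2, by omega⟩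
  have hB : l2 + (s - l2) = l1 + (s - l1) := by ring
  have hstep t (ht : t < n + 2) : aExcess p w t - 1 ≤ aExcess p w (t + 1) :=
    sub_one_le_aExcess_add_one (by omega) (by omega)
  have hend : aExcess p w (n + 2) = l2 - l1 :=
    (pathPt_eq_pathPt_iff hB hwL.ge hpL.ge).1 (hwC.trans hpC.symm)
  have hgap t (ht : t ≤ n + 1) : aExcess p w t ≠ l2 - l1 :=
    aExcess_ne_of_forall_commonPt_eq hB (by omega) (by omega) hpL.ge (by omega)
      (hpC ▸ honly1)
  have hzero t (ht₀ : 0 < t) (ht : t ≤ n + 2) : aExcess p w t ≠ 0 := by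
    simpa using aExcess_ne_of_forall_commonPt_eq rfl (by omega) (by omega) (Nat.zero_le _)
      ht₀.ne' fun P hP => (honly2 P hP.symm).trans (pathPt_zero _ _).symm
  have hlast : aExcess p w (n + 2) < aExcess p w (n + 1) := hend ▸
    lt_of_forall_ne_of_sub_one_le (Nat.zero_le _) (fun t _ ht => hstep t (by omega))
      (fun t _ ht => hgap t ht) (by simpa using hl)
  have hfirst : aExcess p w (0 + 1) < aExcess p w 0 := by
    rw [aExcess_zero]
    refine (hzero 1 one_pos (by omega)).lt_of_le (not_lt.1 fun h => ?_)
    have := lt_of_forall_ne_of_sub_one_le (by omega : 1 ≤ n + 2) (fun t _ ht => hstep t ht) hzero h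
    omega
  obtain ⟨hw₀, hp₀⟩ := (aExcess_add_one_lt_iff (by omega) (by omega)).1 hfirst
  obtain ⟨hw₁, hp₁⟩ := (aExcess_add_one_lt_iff (by omega) (by omega)).1 hlast
  exact ⟨List.exists_eq_cons_append_singleton hwL hw₀ hw₁,
    List.exists_eq_cons_append_singleton hpL hp₀ hp₁⟩
end

section
/- Let u and v be binary words with |u| = |v| = n ≥ 2 such that ||u|_c − |v|_c| = 1 for some letter c ∈ {a,b}. Then (u,v) is not mutually abelian-unbordered; that is, (u,v) has an internal abelian-border or an external abelian-border. -/
theorem exists_eq_of_le_of_succ_le_add_one {f : ℕ → ℤ} (hf : ∀ t, f (t + 1) ≤ f t + 1)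
    {a b : ℕ} (hab : a ≤ b) {c : ℤ} (ha : f a ≤ c) (hb : c ≤ f b) :
    ∃ t, a ≤ t ∧ t ≤ b ∧ f t = c := by
  induction b, hab using Nat.le_induction with
  | base => exact ⟨a, le_rfl, le_rfl, le_antisymm ha hb⟩
  | succ b hab ih =>
    by_cases hcb : c ≤ f b
    · obtain ⟨t, hat, htb, hft⟩ := ih hcb
      exact ⟨t, hat, htb.trans b.le_succ, hft⟩
    · exact ⟨b + 1, by omega, le_rfl, by linarith [hf b]⟩

theorem abEq_of_count_eq {x y : List Bool} (hxy : x.length = y.length) {c : Bool}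
    (h : x.count c = y.count c) : AbEq x y := by
  have hx := List.count_add_count_not x c
  have hy := List.count_add_count_not y c
  unfold AbEq
  cases c <;> simp only [Bool.not_true, Bool.not_false] at hx hy <;> omega

theorem exists_count_eq_count_add_one {u v : List Bool} (huv : u.length = v.length)
    (h : ∃ c : Bool, ((u.count c : ℤ) - (v.count c : ℤ)).natAbs = 1) :
    ∃ c : Bool, v.count c = u.count c + 1 := by
  obtain ⟨c, hc⟩ := h
  have hu := List.count_add_count_not u c
  have hv := List.count_add_count_not v c
  rcases Int.natAbs_eq_iff.mp hc with hc | hc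
  · exact ⟨!c, by omega⟩
  · exact ⟨c, by omega⟩

theorem count_take_le_count_take_succ {α : Type*} [BEq α] (l : List α) (a : α) (t : ℕ) :
    (l.take t).count a ≤ (l.take (t + 1)).count a :=
  (List.take_sublist_take_left t.le_succ).count_le a

theorem count_take_succ_le_count_take_add_one {α : Type*} [BEq α] (l : List α) (a : α) (t : ℕ) :
    (l.take (t + 1)).count a ≤ (l.take t).count a + 1 := by
  rw [List.take_add_one, List.count_append]
  have := (List.count_le_length (a := a) (l := l[t]?.toList)).trans Option.length_toList_le
  omega

/-- `|v[0, t)|_c - |u[|u| - t, |u|)|_c`, the suffix of `u` being read as `u.reverse.take t`. -/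
def crossBalance (c : Bool) (u v : List Bool) (t : ℕ) : ℤ :=
  (v.take t).count c - (u.reverse.take t).count c

section crossBalance

variable {c : Bool} {u v : List Bool}

theorem crossBalance_zero : crossBalance c u v 0 = 0 := by
  simp [crossBalance]

theorem crossBalance_of_length_le {t : ℕ} (hu : u.length ≤ t) (hv : v.length ≤ t) :
    crossBalance c u v t = v.count c - u.count c := by
  rw [crossBalance, List.take_of_length_le hv, List.take_of_length_le (by simpa using hu),
    List.count_reverse]

theorem crossBalance_succ_le_add_one (t : ℕ) :
    crossBalance c u v (t + 1) ≤ crossBalance c u v t + 1 := by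
  have hv := count_take_succ_le_count_take_add_one v c t
  have hu := count_take_le_count_take_succ u.reverse c t
  rw [crossBalance, crossBalance]
  omega

theorem hasIntB_of_crossBalance_eq_zero {t : ℕ} (ht : 0 < t) (htu : t < u.length)
    (htv : t < v.length) (h : crossBalance c u v t = 0) : HasIntB u v := by
  have hx : (u.drop (u.length - t)).length = t := by rw [List.length_drop]; omega
  have hy : (v.take t).length = t := List.length_take_of_le htv.le
  have hcount : (u.drop (u.length - t)).count c = (v.take t).count c := by
    rw [crossBalance, List.take_reverse, List.count_reverse] at h
    omega
  refine ⟨_, _, ?_, ?_, List.drop_suffix _ _, List.take_prefix _ _, ?_,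
    abEq_of_count_eq (hx.trans hy.symm) hcount⟩
  · exact List.ne_nil_of_length_pos (by omega)
  · exact fun h => by rw [h] at hx; omega
  · exact fun h => by rw [h] at hy; omega

theorem hasExtB_of_crossBalance_eq {t : ℕ} (huv : u.length = v.length) (ht : 0 < t)
    (htu : t < u.length) (h : crossBalance c u v t = v.count c - u.count c) :
    HasExtB u v := by
  have hx : (u.take (u.length - t)).length = u.length - t := List.length_take_of_le (by omega)
  have hy : (v.drop t).length = u.length - t := by simp [huv]
  have hcount : (u.take (u.length - t)).count c = (v.drop t).count c := by
    have hv := congrArg (List.count c) (List.take_append_drop t v)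
    have hu := congrArg (List.count c) (List.take_append_drop t u.reverse)
    rw [List.count_append] at hv hu
    rw [List.drop_reverse, List.count_reverse, List.count_reverse] at hu
    rw [crossBalance] at h
    omega
  refine ⟨_, _, ?_, ?_, List.take_prefix _ _, List.drop_suffix _ _, ?_,
    abEq_of_count_eq (hx.trans hy.symm) hcount⟩
  · exact List.ne_nil_of_length_pos (by omega)
  · exact fun h => by rw [h] at hx; omega
  · exact fun h => by rw [h] at hy; omega

end crossBalance

theorem stmt_13 (n : ℕ) (hn : 2 ≤ n) (u v : List Bool)
    (hu : u.length = n) (hv : v.length = n)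
    (h : ∃ c : Bool, ((u.count c : ℤ) - (v.count c : ℤ)).natAbs = 1) :
    HasIntB u v ∨ HasExtB u v := by
  obtain ⟨c, hc⟩ := exists_count_eq_count_add_one (hu.trans hv.symm) h
  by_cases hext : HasExtB u v
  · exact Or.inr hext
  left
  have hstep (t : ℕ) := crossBalance_succ_le_add_one (c := c) (u := u) (v := v) t
  have h₁ : crossBalance c u v 1 ≤ 0 := by
    have hne : crossBalance c u v 1 ≠ 1 := fun h₁ => hext <|
      hasExtB_of_crossBalance_eq (c := c) (hu.trans hv.symm) one_pos (by omega) (by omega)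
    have := hstep 0
    rw [zero_add, crossBalance_zero] at this
    omega
  have hn₁ : 0 ≤ crossBalance c u v (n - 1) := by
    have := hstep (n - 1)
    rw [Nat.sub_add_cancel (by omega), crossBalance_of_length_le hu.le hv.le] at this
    omega
  obtain ⟨t, ht₁, htn, ht⟩ := exists_eq_of_le_of_succ_le_add_one hstep (by omega) h₁ hn₁
  exact hasIntB_of_crossBalance_eq_zero (by omega) (by omega) (by omega) ht
end
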